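/- Let μ and ν be Borel probability measures on a closed set S ⊆ ℝ^d with finite k-th moments (k ≥ 1). Then the total variation distance plus the k-th power of the L^k-Wasserstein distance is bounded by a constant multiple of the weighted variation norm: ‖μ − ν‖_var + W_k(μ,ν)^k ≤ c ‖μ − ν‖_{k,var}, where ‖μ − ν‖_{k,var} := sup_{|f| ≤ 1 + |·|^k} |μ(f) − ν(f)| and c depends only on k. -/

import Mathlib

/-!
Hahn-decompose `μ = λ + a`, `ν = λ + b` with `a ⟂ₘ b`, so that `a` and `b` have the same mass.
For `w = 1 + ‖·‖^k`, a test function `|f| ≤ w` only sees `a - b`, so both variation norms are at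
most `∫ w da + ∫ w db`, and the weighted one attains this value at `f = ±w` on the supports of `a`
and `b`. Leaving `λ` on the diagonal, where the cost vanishes, and coupling `a` with `b`
independently gives a transport plan of cost at most `2^(k-1) (∫ w da + ∫ w db)`, because
`‖x - y‖^k ≤ 2^(k-1) (‖x‖^k + ‖y‖^k)`. Hence `c = 1 + 2^(k-1)` works.
-/

open MeasureTheory Set

/-- Total variation distance `‖μ − ν‖_var = sup_{|f|≤1} |μ(f) − ν(f)|`. -/
noncomputable def totalVarDist {d : ℕ} (μ ν : Measure (EuclideanSpace ℝ (Fin d))) : ℝ :=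
  sSup {r | ∃ f : EuclideanSpace ℝ (Fin d) → ℝ, Measurable f ∧ (∀ x, |f x| ≤ 1) ∧
    r = |(∫ x, f x ∂μ) - ∫ x, f x ∂ν|}

/-- Weighted variation norm `‖μ − ν‖_{k,var} = sup_{|f| ≤ 1 + |·|^k} |μ(f) − ν(f)|`. -/
noncomputable def weightedVarDist {d : ℕ} (k : ℝ)
    (μ ν : Measure (EuclideanSpace ℝ (Fin d))) : ℝ :=
  sSup {r | ∃ f : EuclideanSpace ℝ (Fin d) → ℝ, Measurable f ∧ (∀ x, |f x| ≤ 1 + ‖x‖ ^ k) ∧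
    r = |(∫ x, f x ∂μ) - ∫ x, f x ∂ν|}

/-- The `L^k`-Wasserstein distance `W_k(μ,ν) = (inf_{π ∈ C(μ,ν)} ∫ |x−y|^k dπ)^{1/k}`. -/
noncomputable def wassersteinK {d : ℕ} (k : ℝ)
    (μ ν : Measure (EuclideanSpace ℝ (Fin d))) : ℝ :=
  (sInf {r | ∃ π : Measure (EuclideanSpace ℝ (Fin d) × EuclideanSpace ℝ (Fin d)),
      IsProbabilityMeasure π ∧ π.map Prod.fst = μ ∧ π.map Prod.snd = ν ∧
      r = ∫ p, ‖p.1 - p.2‖ ^ k ∂π}) ^ (1 / k)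

theorem norm_sub_rpow_le {E : Type*} [SeminormedAddCommGroup E] {k : ℝ} (hk : 1 ≤ k) (x y : E) :
    ‖x - y‖ ^ k ≤ 2 ^ (k - 1) * (‖x‖ ^ k + ‖y‖ ^ k) := by
  have h := (NNReal.rpow_le_rpow (nnnorm_sub_le x y) (by linarith)).trans
    (NNReal.rpow_add_le_mul_rpow_add_rpow ‖x‖₊ ‖y‖₊ hk)
  exact_mod_cast h

namespace MeasureTheory.Measure

variable {α : Type*} [MeasurableSpace α]

theorem restrict_le_restrict_of_forall_subset {μ ν : Measure α} {s : Set α} (hs : MeasurableSet s)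
    (h : ∀ t, MeasurableSet t → t ⊆ s → μ t ≤ ν t) : μ.restrict s ≤ ν.restrict s :=
  le_iff.2 fun t ht => by
    rw [restrict_apply ht, restrict_apply ht]
    exact h _ (ht.inter hs) inter_subset_right

theorem exists_eq_add_eq_add_mutuallySingular (μ ν : Measure α) [IsFiniteMeasure μ]
    [IsFiniteMeasure ν] : ∃ lam a b : Measure α, μ = lam + a ∧ ν = lam + b ∧ a ⟂ₘ b := by
  obtain ⟨s, hs, hνμ, hμν⟩ := hahn_decomposition μ ν
  have hle : ν.restrict s ≤ μ.restrict s := restrict_le_restrict_of_forall_subset hs hνμ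
  have hle' : μ.restrict sᶜ ≤ ν.restrict sᶜ := restrict_le_restrict_of_forall_subset hs.compl hμν
  refine ⟨ν.restrict s + μ.restrict sᶜ, μ.restrict s - ν.restrict s,
    ν.restrict sᶜ - μ.restrict sᶜ, ?_, ?_, ?_⟩
  · conv_lhs => rw [← restrict_add_restrict_compl (μ := μ) hs, ← sub_add_cancel_of_le hle]
    ac_rfl
  · conv_lhs => rw [← restrict_add_restrict_compl (μ := ν) hs, ← sub_add_cancel_of_le hle']
    ac_rfl
  · refine MutuallySingular.mono ?_ sub_le sub_le
    exact ⟨sᶜ, hs.compl, by simp [hs], by simp [hs.compl]⟩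

theorem measure_univ_eq_of_add_measure_univ_eq {lam a b : Measure α} [IsFiniteMeasure lam]
    (h : (lam + a) univ = (lam + b) univ) : a univ = b univ := by
  rwa [add_apply, add_apply, ENNReal.add_right_inj (measure_ne_top lam univ)] at h

theorem inv_mul_measure_univ_smul (μ : Measure α) [IsFiniteMeasure μ] :
    ((μ univ)⁻¹ * μ univ) • μ = μ := by
  rcases eq_or_ne (μ univ) 0 with h | h
  · rw [measure_univ_eq_zero.1 h, smul_zero]
  · rw [ENNReal.inv_mul_cancel h (measure_ne_top _ _), one_smul]

theorem map_fst_smul_prod {a b : Measure α} [IsFiniteMeasure a] [IsFiniteMeasure b]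
    (hab : a univ = b univ) : ((a univ)⁻¹ • a.prod b).map Prod.fst = a := by
  rw [Measure.map_smul, map_fst_prod, smul_smul, ← hab, inv_mul_measure_univ_smul]

theorem map_snd_smul_prod {a b : Measure α} [IsFiniteMeasure a] [IsFiniteMeasure b]
    (hab : a univ = b univ) : ((a univ)⁻¹ • a.prod b).map Prod.snd = b := by
  rw [Measure.map_smul, map_snd_prod, smul_smul, hab, inv_mul_measure_univ_smul]

theorem map_fst_map_diag (μ : Measure α) : (μ.map Function.diag).map Prod.fst = μ := by
  rw [map_map measurable_fst measurable_diag]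
  exact map_id

theorem map_snd_map_diag (μ : Measure α) : (μ.map Function.diag).map Prod.snd = μ := by
  rw [map_map measurable_snd measurable_diag]
  exact map_id

end MeasureTheory.Measure

namespace MeasureTheory

variable {α : Type*} [MeasurableSpace α]

section Coupling

variable {κ : Measure (α × α)} {c : α × α → ℝ} {g : α → ℝ}

theorem Integrable.of_le_add_comp_fst_snd (hc : AEStronglyMeasurable c κ) (hc0 : ∀ p, 0 ≤ c p)
    (hcg : ∀ p, c p ≤ g p.1 + g p.2) (h₁ : Integrable g (κ.map Prod.fst))
    (h₂ : Integrable g (κ.map Prod.snd)) : Integrable c κ :=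
  ((h₁.comp_measurable measurable_fst).add (h₂.comp_measurable measurable_snd)).mono' hc
    (ae_of_all _ fun p => by rw [Real.norm_of_nonneg (hc0 p)]; exact hcg p)

theorem integral_le_integral_map_fst_add_integral_map_snd (hc0 : ∀ p, 0 ≤ c p)
    (hcg : ∀ p, c p ≤ g p.1 + g p.2) (h₁ : Integrable g (κ.map Prod.fst))
    (h₂ : Integrable g (κ.map Prod.snd)) :
    ∫ p, c p ∂κ ≤ ∫ x, g x ∂(κ.map Prod.fst) + ∫ x, g x ∂(κ.map Prod.snd) := by
  have h₁' : Integrable (fun p => g p.1) κ := h₁.comp_measurable measurable_fst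
  have h₂' : Integrable (fun p => g p.2) κ := h₂.comp_measurable measurable_snd
  rw [integral_map measurable_fst.aemeasurable h₁.1, integral_map measurable_snd.aemeasurable h₂.1,
    ← integral_add h₁' h₂']
  exact integral_mono_of_nonneg (ae_of_all _ hc0) (h₁'.add h₂') (ae_of_all _ hcg)

theorem exists_coupling_integral_le {lam a b : Measure α} [IsFiniteMeasure a] [IsFiniteMeasure b]
    (hab : a univ = b univ) (hc : Measurable c) (hc0 : ∀ p, 0 ≤ c p) (hdiag : ∀ x, c (x, x) = 0)
    (hcg : ∀ p, c p ≤ g p.1 + g p.2) (hga : Integrable g a) (hgb : Integrable g b) :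
    ∃ π : Measure (α × α), π.map Prod.fst = lam + a ∧ π.map Prod.snd = lam + b ∧
      ∫ p, c p ∂π ≤ ∫ x, g x ∂a + ∫ x, g x ∂b := by
  set κ := (a univ)⁻¹ • a.prod b
  have hκ₁ : κ.map Prod.fst = a := Measure.map_fst_smul_prod hab
  have hκ₂ : κ.map Prod.snd = b := Measure.map_snd_smul_prod hab
  have hc_diag : Integrable c (lam.map Function.diag) := by
    rw [integrable_map_measure hc.aestronglyMeasurable measurable_diag.aemeasurable]
    simp only [Function.comp_def, Function.diag, hdiag]
    exact integrable_zero _ _ _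
  have hc_κ : Integrable c κ := Integrable.of_le_add_comp_fst_snd hc.aestronglyMeasurable hc0 hcg
    (hκ₁ ▸ hga) (hκ₂ ▸ hgb)
  refine ⟨lam.map Function.diag + κ, ?_, ?_, ?_⟩
  · rw [Measure.map_add _ _ measurable_fst, Measure.map_fst_map_diag, hκ₁]
  · rw [Measure.map_add _ _ measurable_snd, Measure.map_snd_map_diag, hκ₂]
  · rw [integral_add_measure hc_diag hc_κ, integral_map measurable_diag.aemeasurable
      hc.aestronglyMeasurable]
    simp only [Function.diag, hdiag, integral_zero, zero_add]
    have h := integral_le_integral_map_fst_add_integral_map_snd hc0 hcg (hκ₁ ▸ hga) (hκ₂ ▸ hgb)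
    rwa [hκ₁, hκ₂] at h

end Coupling

section Variation

variable {lam a b : Measure α} {f w : α → ℝ}

theorem integral_add_measure_sub_integral_add_measure (hl : Integrable f lam)
    (ha : Integrable f a) (hb : Integrable f b) :
    ∫ x, f x ∂(lam + a) - ∫ x, f x ∂(lam + b) = ∫ x, f x ∂a - ∫ x, f x ∂b := by
  rw [integral_add_measure hl ha, integral_add_measure hl hb, add_sub_add_left_eq_sub]

theorem abs_integral_add_measure_sub_le (hf : Measurable f) (hfw : ∀ x, |f x| ≤ w x)
    (hwa : Integrable w (lam + a)) (hwb : Integrable w (lam + b)) :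
    |∫ x, f x ∂(lam + a) - ∫ x, f x ∂(lam + b)| ≤ ∫ x, w x ∂a + ∫ x, w x ∂b := by
  obtain ⟨hwl, hwa⟩ := integrable_add_measure.1 hwa
  have hwb := (integrable_add_measure.1 hwb).2
  have hint {m : Measure α} (hw : Integrable w m) : Integrable f m :=
    hw.mono' hf.aestronglyMeasurable (ae_of_all _ hfw)
  have hbound {m : Measure α} (hw : Integrable w m) : |∫ x, f x ∂m| ≤ ∫ x, w x ∂m :=
    abs_integral_le_integral_abs.trans (integral_mono (hint hw).abs hw hfw)
  rw [integral_add_measure_sub_integral_add_measure (hint hwl) (hint hwa) (hint hwb)]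
  exact (abs_sub _ _).trans (add_le_add (hbound hwa) (hbound hwb))

theorem exists_integral_add_measure_sub_eq (hab : a ⟂ₘ b) (hw : Measurable w)
    (hwa : Integrable w (lam + a)) (hwb : Integrable w (lam + b)) :
    ∃ f : α → ℝ, Measurable f ∧ (∀ x, |f x| = |w x|) ∧
      ∫ x, f x ∂(lam + a) - ∫ x, f x ∂(lam + b) = ∫ x, w x ∂a + ∫ x, w x ∂b := by
  classical
  obtain ⟨s, hs, has, hbs⟩ := hab
  obtain ⟨hwl, hwa⟩ := integrable_add_measure.1 hwa
  have hwb := (integrable_add_measure.1 hwb).2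
  have hfm : Measurable (s.piecewise (-w) w) := hw.neg.piecewise hs hw
  have hfw (x : α) : |s.piecewise (-w) w x| = |w x| := by by_cases hx : x ∈ s <;> simp [hx]
  have hf {m : Measure α} (hm : Integrable w m) : Integrable (s.piecewise (-w) w) m :=
    hm.mono hfm.aestronglyMeasurable (ae_of_all _ fun x => (hfw x).le)
  have hfa : ∫ x, s.piecewise (-w) w x ∂a = ∫ x, w x ∂a :=
    integral_congr_ae <| (measure_eq_zero_iff_ae_notMem.1 has).mono fun x hx => by simp [hx]
  have hfb : ∫ x, s.piecewise (-w) w x ∂b = -∫ x, w x ∂b := by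
    rw [← integral_neg]
    exact integral_congr_ae <| (measure_eq_zero_iff_ae_notMem.1 hbs).mono fun x hx => by
      simp [not_not.1 hx]
  refine ⟨s.piecewise (-w) w, hfm, hfw, ?_⟩
  rw [integral_add_measure_sub_integral_add_measure (hf hwl) (hf hwa) (hf hwb), hfa, hfb,
    sub_neg_eq_add]

end Variation

section Euclidean

variable {d : ℕ} {k : ℝ} {lam a b : Measure (EuclideanSpace ℝ (Fin d))}

theorem wassersteinK_rpow_le (hk : k ≠ 0) {μ ν : Measure (EuclideanSpace ℝ (Fin d))}
    [IsProbabilityMeasure μ] (π : Measure (EuclideanSpace ℝ (Fin d) × EuclideanSpace ℝ (Fin d)))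
    (hπ₁ : π.map Prod.fst = μ) (hπ₂ : π.map Prod.snd = ν) :
    wassersteinK k μ ν ^ k ≤ ∫ p, ‖p.1 - p.2‖ ^ k ∂π := by
  have hπ : IsProbabilityMeasure π := by
    have : IsProbabilityMeasure (π.map Prod.fst) := hπ₁ ▸ inferInstance
    exact Measure.isProbabilityMeasure_of_map Prod.fst
  have hnonneg : ∀ r ∈ {r | ∃ π : Measure (EuclideanSpace ℝ (Fin d) × EuclideanSpace ℝ (Fin d)),
      IsProbabilityMeasure π ∧ π.map Prod.fst = μ ∧ π.map Prod.snd = ν ∧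
      r = ∫ p, ‖p.1 - p.2‖ ^ k ∂π}, 0 ≤ r := by
    rintro _ ⟨π, -, -, -, rfl⟩
    exact integral_nonneg fun p => by positivity
  rw [wassersteinK, ← Real.rpow_mul (Real.sInf_nonneg hnonneg), one_div_mul_cancel hk,
    Real.rpow_one]
  exact csInf_le ⟨0, hnonneg⟩ ⟨π, hπ, hπ₁, hπ₂, rfl⟩

theorem totalVarDist_add_measure_le {w : EuclideanSpace ℝ (Fin d) → ℝ} (hw : ∀ x, 1 ≤ w x)
    (hwa : Integrable w (lam + a)) (hwb : Integrable w (lam + b)) :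
    totalVarDist (lam + a) (lam + b) ≤ ∫ x, w x ∂a + ∫ x, w x ∂b := by
  refine Real.sSup_le ?_ (add_nonneg (integral_nonneg fun x => zero_le_one.trans (hw x))
    (integral_nonneg fun x => zero_le_one.trans (hw x)))
  rintro _ ⟨f, hf, hf1, rfl⟩
  exact abs_integral_add_measure_sub_le hf (fun x => (hf1 x).trans (hw x)) hwa hwb

theorem weightedVarDist_add_measure_eq (hab : a ⟂ₘ b)
    (hwa : Integrable (fun x => 1 + ‖x‖ ^ k) (lam + a))
    (hwb : Integrable (fun x => 1 + ‖x‖ ^ k) (lam + b)) :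
    weightedVarDist k (lam + a) (lam + b) =
      ∫ x, 1 + ‖x‖ ^ k ∂a + ∫ x, 1 + ‖x‖ ^ k ∂b := by
  have hbound : ∀ r ∈ {r | ∃ f : EuclideanSpace ℝ (Fin d) → ℝ, Measurable f ∧
      (∀ x, |f x| ≤ 1 + ‖x‖ ^ k) ∧ r = |(∫ x, f x ∂(lam + a)) - ∫ x, f x ∂(lam + b)|},
      r ≤ ∫ x, 1 + ‖x‖ ^ k ∂a + ∫ x, 1 + ‖x‖ ^ k ∂b := by
    rintro _ ⟨f, hf, hfw, rfl⟩
    exact abs_integral_add_measure_sub_le hf hfw hwa hwb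
  obtain ⟨f, hf, hfw, hfeq⟩ := exists_integral_add_measure_sub_eq (w := fun x => 1 + ‖x‖ ^ k) hab
    (measurable_const.add (measurable_norm.pow_const k)) hwa hwb
  have hw0 (x : EuclideanSpace ℝ (Fin d)) : 0 ≤ 1 + ‖x‖ ^ k := by positivity
  have hsum0 : 0 ≤ ∫ x, 1 + ‖x‖ ^ k ∂a + ∫ x, 1 + ‖x‖ ^ k ∂b :=
    add_nonneg (integral_nonneg hw0) (integral_nonneg hw0)
  refine le_antisymm (Real.sSup_le hbound hsum0) ?_
  refine le_csSup ⟨_, hbound⟩ ⟨f, hf, fun x => (hfw x).trans_le (abs_of_nonneg (hw0 x)).le, ?_⟩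
  rw [hfeq, abs_of_nonneg hsum0]

end Euclidean

end MeasureTheory

open MeasureTheory

theorem totalVar_add_wasserstein_le_weightedVar {d : ℕ} (k : ℝ) (hk : 1 ≤ k) :
    ∃ c > 0, ∀ S : Set (EuclideanSpace ℝ (Fin d)), IsClosed S →
      ∀ μ ν : Measure (EuclideanSpace ℝ (Fin d)),
        IsProbabilityMeasure μ → IsProbabilityMeasure ν →
        μ S = 1 → ν S = 1 →
        Integrable (fun x => ‖x‖ ^ k) μ → Integrable (fun x => ‖x‖ ^ k) ν →
        totalVarDist μ ν + wassersteinK k μ ν ^ k ≤ c * weightedVarDist k μ ν := by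
  refine ⟨1 + 2 ^ (k - 1), by positivity, fun _ _ μ ν _ _ _ _ hμ hν => ?_⟩
  obtain ⟨lam, a, b, rfl, rfl, hab⟩ := Measure.exists_eq_add_eq_add_mutuallySingular μ ν
  have : IsFiniteMeasure lam := isFiniteMeasure_of_le (lam + a) (Measure.le_add_right le_rfl)
  have : IsFiniteMeasure a := isFiniteMeasure_of_le (lam + a) (Measure.le_add_left le_rfl)
  have : IsFiniteMeasure b := isFiniteMeasure_of_le (lam + b) (Measure.le_add_left le_rfl)
  have hmass : a univ = b univ :=
    Measure.measure_univ_eq_of_add_measure_univ_eq (lam := lam) (by simp only [measure_univ])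
  set w : EuclideanSpace ℝ (Fin d) → ℝ := fun x => 1 + ‖x‖ ^ k
  have hw1 (x : EuclideanSpace ℝ (Fin d)) : 1 ≤ w x := le_add_of_nonneg_right (by positivity)
  have hwa : Integrable w (lam + a) := (integrable_const 1).add hμ
  have hwb : Integrable w (lam + b) := (integrable_const 1).add hν
  obtain ⟨π, hπ₁, hπ₂, hπ⟩ := exists_coupling_integral_le (lam := lam) hmass
    (c := fun p => ‖p.1 - p.2‖ ^ k) (g := fun x => 2 ^ (k - 1) * w x) (by fun_prop)
    (fun p => by positivity) (fun x => by simp [Real.zero_rpow (by linarith : k ≠ 0)])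
    (fun p => (norm_sub_rpow_le hk p.1 p.2).trans
      (by rw [← mul_add]; gcongr <;> linarith [hw1 p.1, hw1 p.2]))
    ((integrable_add_measure.1 hwa).2.const_mul _) ((integrable_add_measure.1 hwb).2.const_mul _)
  have hW : wassersteinK k (lam + a) (lam + b) ^ k ≤ 2 ^ (k - 1) * (∫ x, w x ∂a + ∫ x, w x ∂b) :=
    (wassersteinK_rpow_le (by linarith) π hπ₁ hπ₂).trans
      (hπ.trans_eq (by rw [integral_const_mul, integral_const_mul, mul_add]))
  calc totalVarDist (lam + a) (lam + b) + wassersteinK k (lam + a) (lam + b) ^ k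
      ≤ (∫ x, w x ∂a + ∫ x, w x ∂b) + 2 ^ (k - 1) * (∫ x, w x ∂a + ∫ x, w x ∂b) :=
        add_le_add (totalVarDist_add_measure_le hw1 hwa hwb) hW
    _ = (1 + 2 ^ (k - 1)) * weightedVarDist k (lam + a) (lam + b) := by
        rw [weightedVarDist_add_measure_eq hab hwa hwb]; ring
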